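/- Let A be an almost disjoint family on ω such that the associated Isbell–Mrówka space Ψ(A) is k-starcompact for some k ≥ 2. Then A is a maximal almost disjoint family. -/

import Mathlib

open Set Filter Topology

/-- `𝒰` is an open cover of the space `X`. -/
def IsOpenCover {X : Type} [TopologicalSpace X] (𝒰 : Set (Set X)) : Prop :=
  (∀ u ∈ 𝒰, IsOpen u) ∧ ⋃₀ 𝒰 = Set.univ

/-- The star of a set `A` with respect to a collection `𝒰`. -/
def st {X : Type} (A : Set X) (𝒰 : Set (Set X)) : Set X :=
  ⋃₀ {u ∈ 𝒰 | (u ∩ A).Nonempty}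
/-- The `n`-fold iterated star `St^n(A,𝒰)`. -/
def iterSt {X : Type} : ℕ → Set X → Set (Set X) → Set X
  | 0, A, _ => A
  | n + 1, A, 𝒰 => st (iterSt n A 𝒰) 𝒰

/-- `𝒜` is an almost disjoint family of infinite subsets of `ℕ`. -/
def IsAlmostDisjointFamily (𝒜 : Set (Set ℕ)) : Prop :=
  (∀ a ∈ 𝒜, a.Infinite) ∧
    ∀ a ∈ 𝒜, ∀ b ∈ 𝒜, a ≠ b → (a ∩ b).Finite

/-- `𝒜` is a maximal almost disjoint family. -/
def IsMADFamily (𝒜 : Set (Set ℕ)) : Prop :=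
  IsAlmostDisjointFamily 𝒜 ∧
    ∀ B : Set ℕ, B.Infinite → ∃ a ∈ 𝒜, (B ∩ a).Infinite

/-- The topology of the Isbell–Mrówka space `Ψ(𝒜)` on `↥𝒜 ⊕ ℕ`: points of `ℕ`
are isolated and a set is open iff it almost contains `a` (as a set of naturals)
whenever it contains the point `a ∈ 𝒜`. -/
def psiTop (𝒜 : Set (Set ℕ)) : TopologicalSpace (↥𝒜 ⊕ ℕ) where
  IsOpen s := ∀ a : ↥𝒜, Sum.inl a ∈ s → {n ∈ (a : Set ℕ) | Sum.inr n ∉ s}.Finite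
  isOpen_univ := by intro a _; simp
  isOpen_inter := by
    intro s t hs ht a ha
    have : {n ∈ (a : Set ℕ) | Sum.inr n ∉ s ∩ t} ⊆
        {n ∈ (a : Set ℕ) | Sum.inr n ∉ s} ∪ {n ∈ (a : Set ℕ) | Sum.inr n ∉ t} := by
      intro n hn
      rcases hn with ⟨hna, hnst⟩
      by_cases hns : Sum.inr n ∈ s
      · exact Or.inr ⟨hna, fun hnt => hnst ⟨hns, hnt⟩⟩
      · exact Or.inl ⟨hna, hns⟩
    exact Set.Finite.subset ((hs a ha.1).union (ht a ha.2)) this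
  isOpen_sUnion := by
    intro S hS a ha
    rcases ha with ⟨s, hsS, has⟩
    have : {n ∈ (a : Set ℕ) | Sum.inr n ∉ ⋃₀ S} ⊆ {n ∈ (a : Set ℕ) | Sum.inr n ∉ s} := by
      intro n hn
      exact ⟨hn.1, fun hns => hn.2 ⟨s, hsS, hns⟩⟩
    exact Set.Finite.subset (hS s hsS a has) this

/-- `X` is `k`-starcompact. -/
def KStarCompact (X : Type) [TopologicalSpace X] (k : ℕ) : Prop :=
  ∀ 𝒰 : Set (Set X), IsOpenCover 𝒰 →
    ∃ 𝒲 ⊆ 𝒰, 𝒲.Finite ∧ iterSt k (⋃₀ 𝒲) 𝒰 = Set.univ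

/-- `X` is strongly `k`-starcompact. -/
def StronglyKStarCompact (X : Type) [TopologicalSpace X] (k : ℕ) : Prop :=
  ∀ 𝒰 : Set (Set X), IsOpenCover 𝒰 →
    ∃ F : Set X, F.Finite ∧ iterSt k F 𝒰 = Set.univ

/-!
If `B ⊆ ω` is infinite and almost disjoint from every `a ∈ 𝒜`, cover `Ψ(𝒜)` by the
open sets `{a} ∪ (a \ B)` together with all singletons `{n}`. A point `n ∈ B` lies in no member
of this cover other than `{n}`, so no star (of any order) reaches `n` unless the starting set
already contains it. Hence a finite subfamily whose iterated star is the whole space must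
contain `{n}` for every `n ∈ B`, and `B` is finite.
-/

section IsolatedInCover

variable {X : Type} {𝒰 : Set (Set X)} {x : X}

lemma mem_of_mem_st (hx : ∀ u ∈ 𝒰, x ∈ u → u = {x}) {S : Set X} (h : x ∈ st S 𝒰) :
    x ∈ S := by
  obtain ⟨u, ⟨hu𝒰, y, hyu, hyS⟩, hxu⟩ := h
  rw [hx u hu𝒰 hxu, mem_singleton_iff] at hyu
  exact hyu ▸ hyS

lemma mem_of_mem_iterSt (hx : ∀ u ∈ 𝒰, x ∈ u → u = {x}) {S : Set X} :
    ∀ k, x ∈ iterSt k S 𝒰 → x ∈ S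
  | 0, h => h
  | k + 1, h => mem_of_mem_iterSt hx k (mem_of_mem_st hx h)

lemma singleton_mem_of_mem_sUnion (hx : ∀ u ∈ 𝒰, x ∈ u → u = {x}) {𝒲 : Set (Set X)}
    (h𝒲 : 𝒲 ⊆ 𝒰) (h : x ∈ ⋃₀ 𝒲) : {x} ∈ 𝒲 := by
  obtain ⟨w, hw, hxw⟩ := h
  exact hx w (h𝒲 hw) hxw ▸ hw

end IsolatedInCover

lemma KStarCompact.finite_of_isOpenCover {X : Type} [TopologicalSpace X] {k : ℕ}
    (h : KStarCompact X k) {𝒰 : Set (Set X)} (h𝒰 : IsOpenCover 𝒰) {D : Set X}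
    (hD : ∀ x ∈ D, ∀ u ∈ 𝒰, x ∈ u → u = {x}) : D.Finite := by
  obtain ⟨𝒲, h𝒲𝒰, h𝒲fin, h𝒲⟩ := h 𝒰 h𝒰
  have hsub : (fun x => ({x} : Set X)) '' D ⊆ 𝒲 := by
    rintro _ ⟨x, hxD, rfl⟩
    refine singleton_mem_of_mem_sUnion (hD x hxD) h𝒲𝒰 (mem_of_mem_iterSt (hD x hxD) k ?_)
    rw [h𝒲]
    trivial
  exact (h𝒲fin.subset hsub).of_finite_image singleton_injective.injOn

section PsiSpace

variable {𝒜 : Set (Set ℕ)} {B : Set ℕ}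

def psiCover (𝒜 : Set (Set ℕ)) (B : Set ℕ) : Set (Set (↥𝒜 ⊕ ℕ)) :=
  range (fun a : ↥𝒜 => insert (Sum.inl a) (Sum.inr '' ((a : Set ℕ) \ B))) ∪
    range (fun n : ℕ => {Sum.inr n})

lemma isOpenCover_psiCover (hB : ∀ a ∈ 𝒜, (B ∩ a).Finite) :
    @IsOpenCover _ (psiTop 𝒜) (psiCover 𝒜 B) := by
  refine ⟨?_, eq_univ_of_forall ?_⟩
  · rintro u (⟨a, rfl⟩ | ⟨n, rfl⟩) a' ha'
    · obtain rfl : a' = a := by simpa using ha'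
      refine (hB a' a'.2).subset fun n ⟨hna, hnu⟩ => ⟨?_, hna⟩
      by_contra hnB
      exact hnu (Or.inr ⟨n, ⟨hna, hnB⟩, rfl⟩)
    · simp at ha'
  · rintro (a | n)
    · exact ⟨_, Or.inl ⟨a, rfl⟩, mem_insert _ _⟩
    · exact ⟨_, Or.inr ⟨n, rfl⟩, rfl⟩

lemma eq_singleton_of_mem_psiCover {n : ℕ} (hn : n ∈ B) :
    ∀ u ∈ psiCover 𝒜 B, Sum.inr n ∈ u → u = {Sum.inr n} := by
  rintro u (⟨a, rfl⟩ | ⟨m, rfl⟩) hnu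
  · simp only [mem_insert_iff, reduceCtorEq, mem_image, Set.mem_sdiff, Sum.inr.injEq,
      exists_eq_right, false_or] at hnu
    exact absurd hn hnu.2
  · rw [mem_singleton_iff.mp hnu]

end PsiSpace

theorem stmt_general (𝒜 : Set (Set ℕ)) (had : IsAlmostDisjointFamily 𝒜)
    (k : ℕ)
    (h : @KStarCompact (↥𝒜 ⊕ ℕ) (psiTop 𝒜) k) :
    IsMADFamily 𝒜 := by
  let _ := psiTop 𝒜
  refine ⟨had, fun B hB => ?_⟩
  by_contra! hBa
  have hfin : (Sum.inr '' B : Set (↥𝒜 ⊕ ℕ)).Finite :=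
    h.finite_of_isOpenCover (isOpenCover_psiCover hBa) (by
      rintro _ ⟨n, hn, rfl⟩
      exact eq_singleton_of_mem_psiCover hn)
  exact hB (hfin.of_finite_image Sum.inr_injective.injOn)

theorem stmt (𝒜 : Set (Set ℕ)) (had : IsAlmostDisjointFamily 𝒜)
    (k : ℕ) (hk : 2 ≤ k)
    (h : @KStarCompact (↥𝒜 ⊕ ℕ) (psiTop 𝒜) k) :
    IsMADFamily 𝒜 :=
  stmt_general 𝒜 had k h
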